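/- Let d ≥ 1 and let I ⊂ ℤ^d∖{0} be a finite set which is a generator and satisfies the connectedness condition. Then for every m ∈ ℤ^d, the functions c_m and s_m belong to H_∞(I). -/

import Mathlib

open Real MeasureTheory

/-- ⟨x, m⟩ = ∑ x_j m_j for x ∈ ℝ^d, m ∈ ℤ^d. -/
noncomputable def ip (d : ℕ) (x : Fin d → ℝ) (m : Fin d → ℤ) : ℝ :=
  ∑ j, x j * (m j : ℝ)

/-- Integer inner product on ℤ^d. -/
def ipZ (d : ℕ) (m l : Fin d → ℤ) : ℤ := ∑ j, m j * l j

/-- c_m(x) = cos⟨x,m⟩. -/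
noncomputable def cmap (d : ℕ) (m : Fin d → ℤ) : (Fin d → ℝ) → ℝ :=
  fun x => Real.cos (ip d x m)

/-- s_m(x) = sin⟨x,m⟩. -/
noncomputable def smap (d : ℕ) (m : Fin d → ℤ) : (Fin d → ℝ) → ℝ :=
  fun x => Real.sin (ip d x m)

/-- B(φ)(x) = ∑_j (∂_{x_j} φ(x))². -/
noncomputable def Bop (d : ℕ) (φ : (Fin d → ℝ) → ℝ) : (Fin d → ℝ) → ℝ :=
  fun x => ∑ j, (fderiv ℝ φ x (Pi.single j 1)) ^ 2

/-- Functions representable as θ₀ − ∑_{j=1}^n B(θ_j) with θ's in H, n ≥ 1. -/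
noncomputable def BRep (d : ℕ) (H : Set ((Fin d → ℝ) → ℝ)) : Set ((Fin d → ℝ) → ℝ) :=
  { f | ∃ n : ℕ, 1 ≤ n ∧ ∃ θ₀ ∈ H, ∃ θ : Fin n → (Fin d → ℝ) → ℝ,
      (∀ j, θ j ∈ H) ∧ f = θ₀ - ∑ j, Bop d (θ j) }

/-- F(H): f such that both f and −f are representable. -/
noncomputable def Fop (d : ℕ) (H : Set ((Fin d → ℝ) → ℝ)) : Set ((Fin d → ℝ) → ℝ) :=
  { f | f ∈ BRep d H ∧ -f ∈ BRep d H }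

/-- H(I): span of {1} ∪ {c_k, s_k : k ∈ I}. -/
noncomputable def H0 (d : ℕ) (I : Finset (Fin d → ℤ)) : Set ((Fin d → ℝ) → ℝ) :=
  ↑(Submodule.span ℝ
      ({fun _ => (1:ℝ)} ∪ ⋃ k ∈ (I : Set (Fin d → ℤ)), {cmap d k, smap d k}))

noncomputable def HSeq (d : ℕ) (I : Finset (Fin d → ℤ)) : ℕ → Set ((Fin d → ℝ) → ℝ)
  | 0 => H0 d I
  | j + 1 => Fop d (HSeq d I j)

/-- H_∞(I) = ⋃_j H_j(I). -/
noncomputable def Hinf (d : ℕ) (I : Finset (Fin d → ℤ)) : Set ((Fin d → ℝ) → ℝ) :=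
  ⋃ j, HSeq d I j

/-- I generates ℤ^d over ℤ. -/
def IsGenerator (d : ℕ) (I : Finset (Fin d → ℤ)) : Prop :=
  ∀ n : Fin d → ℤ, ∃ a : (Fin d → ℤ) → ℤ, n = ∑ k ∈ I, a k • k

/-- Connectedness condition of Proposition 2.5. -/
def ConnectedSet (d : ℕ) (I : Finset (Fin d → ℤ)) : Prop :=
  ∀ l ∈ I, ∀ m ∈ I, ∃ k : ℕ, ∃ n : Fin (k + 1) → (Fin d → ℤ),
    (∀ j, n j ∈ I) ∧ ipZ d l (n 0) ≠ 0 ∧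
    (∀ j : Fin k, ipZ d (n j.castSucc) (n j.succ) ≠ 0) ∧
    ipZ d (n (Fin.last k)) m ≠ 0

/-- (2πℤ^d)-periodicity for real-valued functions. -/
def Periodic2pi (d : ℕ) (f : (Fin d → ℝ) → ℝ) : Prop :=
  ∀ (x : Fin d → ℝ) (k : Fin d → ℤ), f (x + fun j => 2 * Real.pi * (k j : ℝ)) = f x

/-!
If `H` is a linear space of functions containing the constants and `c_k, s_k, c_l, s_l ∈ H`,
then the real and imaginary parts `φ, ψ` of `e^{i⟨k,x⟩} + (u + iv) e^{i⟨l,x⟩}` lie in `H` and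
`B(φ) + B(ψ) = const + 2⟨k,l⟩ (u c_{k-l} + v s_{k-l})`. So when `⟨k,l⟩ ≠ 0` every combination
of `c_{k-l}, s_{k-l}` lies in `F(H)`, and the set of frequencies reached at a finite level
contains `I` and is closed under negation, integer multiples and `a ± b` whenever `⟨a,b⟩ ≠ 0`.

To add `±k` (`k ∈ I`) to a reached `m ≠ 0`, pick `l ∈ I` with `⟨m,l⟩ ≠ 0` (`I` generates) and a
chain from `l` to `k` of non-orthogonal elements of `I`. Going down the chain from `p` to its
successor `h`: add a multiple `q p` to `m` with `q` chosen so that `⟨m + q p, h⟩ ≠ 0`, continue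
from `h`, and finally subtract `q p`, which is allowed for all but finitely many `q`.
-/

section Analysis

variable {d : ℕ}

noncomputable def ipCLM (d : ℕ) (m : Fin d → ℤ) : (Fin d → ℝ) →L[ℝ] ℝ :=
  ∑ j, (m j : ℝ) • ContinuousLinearMap.proj j

lemma ipCLM_apply (m : Fin d → ℤ) (x : Fin d → ℝ) : ipCLM d m x = ip d x m := by
  simp [ipCLM, ip, mul_comm]

lemma ipCLM_single (m : Fin d → ℤ) (j : Fin d) : ipCLM d m (Pi.single j 1) = m j := by
  simp [ipCLM_apply, ip, Pi.single_apply]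

lemma ip_sub (x : Fin d → ℝ) (k l : Fin d → ℤ) : ip d x (k - l) = ip d x k - ip d x l := by
  simp [ip, mul_sub]

lemma ip_neg (x : Fin d → ℝ) (m : Fin d → ℤ) : ip d x (-m) = -ip d x m := by
  simp [ip]

lemma hasFDerivAt_ip (m : Fin d → ℤ) (x : Fin d → ℝ) :
    HasFDerivAt (fun y => ip d y m) (ipCLM d m) x := by
  convert (ipCLM d m).hasFDerivAt using 1
  exact funext fun y => (ipCLM_apply m y).symm

lemma hasFDerivAt_cmap (m : Fin d → ℤ) (x : Fin d → ℝ) :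
    HasFDerivAt (cmap d m) (-smap d m x • ipCLM d m) x :=
  (Real.hasDerivAt_cos _).comp_hasFDerivAt x (hasFDerivAt_ip m x)

lemma hasFDerivAt_smap (m : Fin d → ℤ) (x : Fin d → ℝ) :
    HasFDerivAt (smap d m) (cmap d m x • ipCLM d m) x :=
  (Real.hasDerivAt_sin _).comp_hasFDerivAt x (hasFDerivAt_ip m x)

lemma Bop_apply_of_hasFDerivAt {φ : (Fin d → ℝ) → ℝ} {x : Fin d → ℝ} {k l : Fin d → ℤ}
    {P Q : ℝ} (h : HasFDerivAt φ (P • ipCLM d k + Q • ipCLM d l) x) :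
    Bop d φ x = P ^ 2 * (k ⬝ᵥ k : ℤ) + 2 * P * Q * (k ⬝ᵥ l : ℤ) + Q ^ 2 * (l ⬝ᵥ l : ℤ) := by
  simp only [Bop, h.fderiv, add_apply, smul_apply,
    ipCLM_single, smul_eq_mul, dotProduct, Int.cast_sum, Int.cast_mul, Finset.mul_sum,
    ← Finset.sum_add_distrib]
  exact Finset.sum_congr rfl fun j _ => by ring

-- `φ + iψ = e^{i⟨k,x⟩} + (u + iv) e^{i⟨l,x⟩}`, so `B(φ) + B(ψ) = |∇(φ + iψ)|²`.
lemma Bop_re_add_Bop_im (k l : Fin d → ℤ) (u v : ℝ) (x : Fin d → ℝ) :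
    Bop d (cmap d k + u • cmap d l - v • smap d l) x
        + Bop d (smap d k + u • smap d l + v • cmap d l) x =
      (k ⬝ᵥ k : ℤ) + (u ^ 2 + v ^ 2) * (l ⬝ᵥ l : ℤ)
        + 2 * (k ⬝ᵥ l : ℤ) * (u * cmap d (k - l) x + v * smap d (k - l) x) := by
  have hφ : HasFDerivAt (cmap d k + u • cmap d l - v • smap d l)
      ((-smap d k x) • ipCLM d k + (-u * smap d l x - v * cmap d l x) • ipCLM d l) x := by
    refine (((hasFDerivAt_cmap k x).add ((hasFDerivAt_cmap l x).const_smul u)).sub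
      ((hasFDerivAt_smap l x).const_smul v)).congr_fderiv ?_
    module
  have hψ : HasFDerivAt (smap d k + u • smap d l + v • cmap d l)
      (cmap d k x • ipCLM d k + (u * cmap d l x - v * smap d l x) • ipCLM d l) x := by
    refine (((hasFDerivAt_smap k x).add ((hasFDerivAt_smap l x).const_smul u)).add
      ((hasFDerivAt_cmap l x).const_smul v)).congr_fderiv ?_
    module
  rw [Bop_apply_of_hasFDerivAt hφ, Bop_apply_of_hasFDerivAt hψ]
  simp only [cmap, smap, ip_sub, Real.cos_sub, Real.sin_sub]
  linear_combination ((k ⬝ᵥ k : ℤ) : ℝ) * Real.sin_sq_add_cos_sq (ip d x k)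
    + (u ^ 2 + v ^ 2) * ((l ⬝ᵥ l : ℤ) : ℝ) * Real.sin_sq_add_cos_sq (ip d x l)

lemma Bop_zero : Bop d 0 = 0 := by
  ext x
  simp [Bop]

lemma Bop_const_smul (c : ℝ) (f : (Fin d → ℝ) → ℝ) : Bop d (c • f) = c ^ 2 • Bop d f := by
  ext x
  simp [Bop, fderiv_const_smul_field, Finset.mul_sum, mul_pow]

section Representable

variable (M : Submodule ℝ ((Fin d → ℝ) → ℝ))

lemma mem_BRep_of_mem {f : (Fin d → ℝ) → ℝ} (hf : f ∈ M) : f ∈ BRep d M :=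
  ⟨1, le_rfl, f, hf, fun _ => 0, fun _ => M.zero_mem, by simp [Bop_zero]⟩

lemma sub_Bop_sub_Bop_mem_BRep {θ u v : (Fin d → ℝ) → ℝ} (hθ : θ ∈ M) (hu : u ∈ M)
    (hv : v ∈ M) : θ - Bop d u - Bop d v ∈ BRep d M :=
  ⟨2, one_le_two, θ, hθ, ![u, v], Fin.forall_fin_two.2 ⟨hu, hv⟩, by
    rw [Fin.sum_univ_two, sub_sub]; rfl⟩

lemma add_mem_BRep {f g : (Fin d → ℝ) → ℝ} (hf : f ∈ BRep d M) (hg : g ∈ BRep d M) :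
    f + g ∈ BRep d M := by
  obtain ⟨n, hn, θ₀, hθ₀, θ, hθ, rfl⟩ := hf
  obtain ⟨n', -, θ₀', hθ₀', θ', hθ', rfl⟩ := hg
  refine ⟨n + n', le_add_right hn, θ₀ + θ₀', M.add_mem hθ₀ hθ₀', Fin.append θ θ',
    Fin.addCases (by simpa using hθ) (by simpa using hθ'), ?_⟩
  rw [Fin.sum_univ_add]
  simp only [Fin.append_left, Fin.append_right]
  abel

lemma smul_mem_BRep {c : ℝ} (hc : 0 ≤ c) {f : (Fin d → ℝ) → ℝ} (hf : f ∈ BRep d M) :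
    c • f ∈ BRep d M := by
  obtain ⟨n, hn, θ₀, hθ₀, θ, hθ, rfl⟩ := hf
  refine ⟨n, hn, c • θ₀, M.smul_mem c hθ₀, fun j => √c • θ j,
    fun j => M.smul_mem _ (hθ j), ?_⟩
  simp only [Bop_const_smul, Real.sq_sqrt hc, smul_sub, Finset.smul_sum]

noncomputable def FopSubmodule : Submodule ℝ ((Fin d → ℝ) → ℝ) where
  carrier := Fop d M
  add_mem' := by
    rintro f g ⟨hf, hf'⟩ ⟨hg, hg'⟩
    exact ⟨add_mem_BRep M hf hg, by simpa [neg_add_rev] using add_mem_BRep M hg' hf'⟩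
  zero_mem' := ⟨mem_BRep_of_mem M M.zero_mem, by simpa using mem_BRep_of_mem M M.zero_mem⟩
  smul_mem' := by
    rintro c f ⟨hf, hf'⟩
    rcases le_or_gt 0 c with hc | hc
    · exact ⟨smul_mem_BRep M hc hf, smul_neg c f ▸ smul_mem_BRep M hc hf'⟩
    · refine ⟨?_, ?_⟩
      · simpa using smul_mem_BRep M (neg_nonneg.2 hc.le) hf'
      · simpa using smul_mem_BRep M (neg_nonneg.2 hc.le) hf

lemma le_FopSubmodule : M ≤ FopSubmodule M := fun _ hf =>
  ⟨mem_BRep_of_mem M hf, mem_BRep_of_mem M (M.neg_mem hf)⟩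

end Representable

lemma const_mem_of_one_mem {M : Submodule ℝ ((Fin d → ℝ) → ℝ)} (h1 : (fun _ => (1 : ℝ)) ∈ M)
    (c : ℝ) : (fun _ => c) ∈ M := by
  convert M.smul_mem c h1
  simp

theorem cmap_smap_sub_mem_FopSubmodule {M : Submodule ℝ ((Fin d → ℝ) → ℝ)}
    (h1 : (fun _ => (1 : ℝ)) ∈ M) {k l : Fin d → ℤ} (hck : cmap d k ∈ M) (hsk : smap d k ∈ M)
    (hcl : cmap d l ∈ M) (hsl : smap d l ∈ M) (hkl : k ⬝ᵥ l ≠ 0) :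
    cmap d (k - l) ∈ FopSubmodule M ∧ smap d (k - l) ∈ FopSubmodule M := by
  have hR : ((k ⬝ᵥ l : ℤ) : ℝ) ≠ 0 := by exact_mod_cast hkl
  have hrep : ∀ α β : ℝ, α • cmap d (k - l) + β • smap d (k - l) ∈ BRep d M := by
    intro α β
    set u := -α / (2 * (k ⬝ᵥ l : ℤ))
    set v := -β / (2 * (k ⬝ᵥ l : ℤ))
    convert sub_Bop_sub_Bop_mem_BRep M
      (const_mem_of_one_mem h1 ((k ⬝ᵥ k : ℤ) + (u ^ 2 + v ^ 2) * (l ⬝ᵥ l : ℤ)))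
      (M.sub_mem (M.add_mem hck (M.smul_mem u hcl)) (M.smul_mem v hsl))
      (M.add_mem (M.add_mem hsk (M.smul_mem u hsl)) (M.smul_mem v hcl)) using 1
    ext x
    rw [Pi.sub_apply, Pi.sub_apply, sub_sub, Bop_re_add_Bop_im]
    simp only [u, v, Pi.add_apply, Pi.smul_apply, smul_eq_mul]
    field_simp
    ring
  exact ⟨⟨by simpa using hrep 1 0, by simpa using hrep (-1) 0⟩,
    ⟨by simpa using hrep 0 1, by simpa using hrep 0 (-1)⟩⟩

end Analysis

section Frequencies

variable {d : ℕ} {I : Finset (Fin d → ℤ)}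

-- Each of the last two conditions fails for at most one `q`, so one of `1, 2, 3` works.
lemma exists_ne_zero_add_mul_ne_zero {A B C D : ℤ} (hB : B ≠ 0) (hD : D ≠ 0) :
    ∃ q : ℤ, q ≠ 0 ∧ A + q * B ≠ 0 ∧ C + q * D ≠ 0 := by
  by_contra! h
  have h1 := h 1 one_ne_zero
  have h2 := h 2 two_ne_zero
  have h3 := h 3 three_ne_zero
  omega

variable (d I) in
noncomputable def HSubmodule : ℕ → Submodule ℝ ((Fin d → ℝ) → ℝ)
  | 0 => Submodule.span ℝ ({fun _ => (1 : ℝ)} ∪ ⋃ k ∈ (I : Set (Fin d → ℤ)), {cmap d k, smap d k})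
  | j + 1 => FopSubmodule (HSubmodule j)

lemma coe_HSubmodule (j : ℕ) : (HSubmodule d I j : Set ((Fin d → ℝ) → ℝ)) = HSeq d I j := by
  induction j with
  | zero => rfl
  | succ j ih => rw [HSeq, ← ih]; rfl

lemma HSubmodule_mono : Monotone (HSubmodule d I) :=
  monotone_nat_of_le_succ fun _ => le_FopSubmodule _

lemma one_mem_HSubmodule (j : ℕ) : (fun _ => (1 : ℝ)) ∈ HSubmodule d I j :=
  HSubmodule_mono (Nat.zero_le j) (Submodule.subset_span (Or.inl rfl))

variable (d I) in
def reachable : Set (Fin d → ℤ) :=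
  {m | ∃ j, cmap d m ∈ HSubmodule d I j ∧ smap d m ∈ HSubmodule d I j}

namespace reachable

lemma zero_mem : (0 : Fin d → ℤ) ∈ reachable d I := by
  have hc : cmap d 0 = fun _ => 1 := by ext; simp [cmap, ip]
  have hs : smap d 0 = 0 := by ext; simp [smap, ip]
  exact ⟨0, hc ▸ one_mem_HSubmodule 0, hs ▸ Submodule.zero_mem _⟩

lemma of_mem {k : Fin d → ℤ} (hk : k ∈ I) : k ∈ reachable d I :=
  ⟨0, Submodule.subset_span (Or.inr (Set.mem_biUnion hk (by simp))),
    Submodule.subset_span (Or.inr (Set.mem_biUnion hk (by simp)))⟩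

lemma neg_mem {m : Fin d → ℤ} (hm : m ∈ reachable d I) : -m ∈ reachable d I := by
  obtain ⟨j, hc, hs⟩ := hm
  have hc' : cmap d (-m) = cmap d m := by ext; simp [cmap, ip_neg]
  have hs' : smap d (-m) = -smap d m := by ext; simp [smap, ip_neg]
  exact ⟨j, hc' ▸ hc, hs' ▸ Submodule.neg_mem _ hs⟩

lemma sub_mem {a b : Fin d → ℤ} (ha : a ∈ reachable d I) (hb : b ∈ reachable d I)
    (hab : a ⬝ᵥ b ≠ 0) : a - b ∈ reachable d I := by
  obtain ⟨i, hca, hsa⟩ := ha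
  obtain ⟨j, hcb, hsb⟩ := hb
  have hi := HSubmodule_mono (I := I) (le_max_left i j)
  have hj := HSubmodule_mono (I := I) (le_max_right i j)
  exact ⟨max i j + 1, cmap_smap_sub_mem_FopSubmodule (one_mem_HSubmodule _)
    (hi hca) (hi hsa) (hj hcb) (hj hsb) hab⟩

lemma add_mem {a b : Fin d → ℤ} (ha : a ∈ reachable d I) (hb : b ∈ reachable d I)
    (hab : a ⬝ᵥ b ≠ 0) : a + b ∈ reachable d I := by
  simpa using sub_mem ha (neg_mem hb) (by simpa using hab)

lemma nsmul_mem {p : Fin d → ℤ} (hp : p ∈ reachable d I) (hp0 : p ≠ 0) :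
    ∀ n : ℕ, n • p ∈ reachable d I
  | 0 => by simpa using zero_mem
  | 1 => by simpa using hp
  | n + 2 => by
    rw [succ_nsmul]
    refine add_mem (nsmul_mem hp hp0 (n + 1)) hp ?_
    rw [smul_dotProduct, nsmul_eq_mul]
    exact mul_ne_zero (by positivity) (dotProduct_self_eq_zero.not.2 hp0)

lemma zsmul_mem {p : Fin d → ℤ} (hp : p ∈ reachable d I) (q : ℤ) : q • p ∈ reachable d I := by
  rcases eq_or_ne p 0 with rfl | hp0
  · simpa using zero_mem
  rcases Int.natAbs_eq q with hq | hq <;> rw [hq]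
  · simpa using nsmul_mem hp hp0 q.natAbs
  · simpa using neg_mem (nsmul_mem hp hp0 q.natAbs)

end reachable

variable (I) in
def IsPivot (t p : Fin d → ℤ) : Prop :=
  ∀ m ∈ reachable d I, m ⬝ᵥ p ≠ 0 → m + t ∈ reachable d I

lemma isPivot_self {t : Fin d → ℤ} (ht : t ∈ reachable d I) : IsPivot I t t :=
  fun _ hm hmt => reachable.add_mem hm ht hmt

lemma IsPivot.of_dotProduct_ne_zero {t p h : Fin d → ℤ} (H : IsPivot I t h)
    (hp : p ∈ reachable d I) (hph : p ⬝ᵥ h ≠ 0) : IsPivot I t p := by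
  intro m hm hmp
  have hpp : p ⬝ᵥ p ≠ 0 := dotProduct_self_eq_zero.not.2 (by rintro rfl; simp at hph)
  obtain ⟨q, hq, hqh, hqp⟩ := exists_ne_zero_add_mul_ne_zero (A := m ⬝ᵥ h)
    (C := m ⬝ᵥ p + t ⬝ᵥ p) hph hpp
  have hq_mem := reachable.zsmul_mem hp q
  have h₁ : m + q • p ∈ reachable d I := by
    refine reachable.add_mem hm hq_mem ?_
    rw [dotProduct_smul, smul_eq_mul]
    exact mul_ne_zero hq hmp
  have h₂ : m + q • p + t ∈ reachable d I := by
    refine H _ h₁ ?_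
    rwa [add_dotProduct, smul_dotProduct, smul_eq_mul]
  have h₃ : m + q • p + t - q • p ∈ reachable d I := by
    refine reachable.sub_mem h₂ hq_mem ?_
    rw [dotProduct_smul, add_dotProduct, add_dotProduct, smul_dotProduct, smul_eq_mul,
      smul_eq_mul]
    convert mul_ne_zero hq hqp using 2
    ring
  rwa [add_sub_right_comm, add_sub_cancel_right] at h₃

lemma isPivot_of_connectedSet (hconn : ConnectedSet d I) {l k : Fin d → ℤ} (hl : l ∈ I)
    (hk : k ∈ I) {q : ℤ} (hq : q ≠ 0) : IsPivot I (q • k) l := by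
  obtain ⟨n, c, hc, hl₀, hcc, hlast⟩ := hconn l hl k hk
  have ht : q • k ∈ reachable d I := reachable.zsmul_mem (reachable.of_mem hk) q
  have hpivot : ∀ i, IsPivot I (q • k) (c i) := by
    -- `ipZ d a b` is `a ⬝ᵥ b` by definition.
    refine Fin.reverseInduction ?_ fun i H =>
      H.of_dotProduct_ne_zero (reachable.of_mem (hc _)) (hcc i)
    refine (isPivot_self ht).of_dotProduct_ne_zero (reachable.of_mem (hc _)) ?_
    rw [dotProduct_smul, smul_eq_mul]
    exact mul_ne_zero hq hlast
  exact (hpivot 0).of_dotProduct_ne_zero (reachable.of_mem hl) hl₀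

lemma IsGenerator.exists_dotProduct_ne_zero (hgen : IsGenerator d I) {m : Fin d → ℤ}
    (hm : m ≠ 0) : ∃ l ∈ I, m ⬝ᵥ l ≠ 0 := by
  by_contra! h
  obtain ⟨a, ha⟩ := hgen m
  refine hm (dotProduct_self_eq_zero.1 ?_)
  calc m ⬝ᵥ m = m ⬝ᵥ ∑ k ∈ I, a k • k := congrArg (m ⬝ᵥ ·) ha
    _ = ∑ k ∈ I, a k • (m ⬝ᵥ k) := by simp only [dotProduct_sum, dotProduct_smul]
    _ = 0 := Finset.sum_eq_zero fun k hk => by rw [h k hk, smul_zero]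

lemma IsGenerator.mem_closure (hgen : IsGenerator d I) (m : Fin d → ℤ) :
    m ∈ AddSubgroup.closure (I : Set (Fin d → ℤ)) := by
  obtain ⟨a, rfl⟩ := hgen m
  exact AddSubgroup.sum_mem _ fun k hk =>
    AddSubgroup.zsmul_mem _ (AddSubgroup.subset_closure hk) _

lemma zsmul_add_mem_reachable (hgen : IsGenerator d I) (hconn : ConnectedSet d I)
    {m k : Fin d → ℤ} (hm : m ∈ reachable d I) (hk : k ∈ I) {q : ℤ} (hq : q ≠ 0) :
    q • k + m ∈ reachable d I := by
  rcases eq_or_ne m 0 with rfl | hm₀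
  · simpa using reachable.zsmul_mem (reachable.of_mem hk) q
  obtain ⟨l, hl, hml⟩ := hgen.exists_dotProduct_ne_zero hm₀
  rw [add_comm]
  exact isPivot_of_connectedSet hconn hl hk hq m hm hml

theorem mem_reachable (hgen : IsGenerator d I) (hconn : ConnectedSet d I) (m : Fin d → ℤ) :
    m ∈ reachable d I := by
  induction hgen.mem_closure m using AddSubgroup.closure_induction_left with
  | zero => exact reachable.zero_mem
  | add_left k hk y _ hy => simpa using zsmul_add_mem_reachable hgen hconn hy hk one_ne_zero
  | neg_add_cancel k hk y _ hy =>
    simpa using zsmul_add_mem_reachable hgen hconn hy hk (neg_ne_zero.2 one_ne_zero)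

end Frequencies

theorem stmt8_general (d : ℕ) (I : Finset (Fin d → ℤ))
    (hgen : IsGenerator d I) (hconn : ConnectedSet d I) (m : Fin d → ℤ) :
    cmap d m ∈ Hinf d I ∧ smap d m ∈ Hinf d I := by
  obtain ⟨j, hc, hs⟩ := mem_reachable hgen hconn m
  rw [← SetLike.mem_coe, coe_HSubmodule] at hc hs
  exact ⟨Set.mem_iUnion_of_mem j hc, Set.mem_iUnion_of_mem j hs⟩

/-- if I is a generator and satisfies the connectedness
condition, then c_m, s_m ∈ H_∞(I) for every m ∈ ℤ^d. -/
theorem stmt8 (d : ℕ) (hd : 1 ≤ d) (I : Finset (Fin d → ℤ)) (hI : ∀ k ∈ I, k ≠ 0)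
    (hgen : IsGenerator d I) (hconn : ConnectedSet d I) (m : Fin d → ℤ) :
    cmap d m ∈ Hinf d I ∧ smap d m ∈ Hinf d I :=
  stmt8_general d I hgen hconn m
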